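/- Let Γ = (V,A) be a finite connected digraph, let G ≤ Aut(Γ) be vertex-transitive, and suppose Γ is (G,s)-arc-transitive with s ≥ 2. Let N ⊴ G have at least 3 orbits on V. Then there exists a normal subgroup M of G with N ≤ M and M having at least 3 orbits on V, such that: the kernel of the induced action of G on V_M equals M (so G/M acts faithfully on Γ_M); the quotient Γ_M is a connected digraph that is (G/M)-vertex-transitive and (G/M,s)-arc-transitive; and G/M is quasiprimitive or bi-quasiprimitive on V_M. Moreover, if no G-normal quotient of Γ is isomorphic to a directed cycle C_r→ with r ≥ 3, then no (G/M)-normal quotient of Γ_M is isomorphic to a directed cycle C_r→ with r ≥ 3. -/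

import Mathlib

namespace ArcTransDigraph

variable {V : Type*}

/-- The arc set of a digraph is asymmetric (in particular loopless). -/
def IsDigraph (A : V → V → Prop) : Prop := ∀ u v : V, A u v → ¬ A v u

/-- Connectivity of the underlying undirected graph. -/
def Connected (A : V → V → Prop) : Prop :=
  ∀ u v : V, Relation.ReflTransGen (fun a b => A a b ∨ A b a) u v

/-- `G` consists of automorphisms of the digraph `(V, A)`. -/
def PreservesArcs (A : V → V → Prop) (G : Subgroup (Equiv.Perm V)) : Prop :=
  ∀ g ∈ G, ∀ u v : V, A u v → A (g u) (g v)

/-- `G` is transitive on vertices. -/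
def VertexTransitive (G : Subgroup (Equiv.Perm V)) : Prop :=
  ∀ u v : V, ∃ g ∈ G, g u = v

/-- `p` is an `s`-arc of the digraph with arc set `A`. -/
def IsArcSeq (A : V → V → Prop) (s : ℕ) (p : Fin (s + 1) → V) : Prop :=
  ∀ i : Fin s, A (p i.castSucc) (p i.succ)

/-- `G` is transitive on the `s`-arcs of the digraph with arc set `A`. -/
def ArcTransitive (A : V → V → Prop) (G : Subgroup (Equiv.Perm V)) (s : ℕ) : Prop :=
  ∀ p q : Fin (s + 1) → V, IsArcSeq A s p → IsArcSeq A s q →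
    ∃ g ∈ G, ∀ i : Fin (s + 1), g (p i) = q i

/-- `N` is a subgroup of `G` which is normal in `G`. -/
def NormalIn (N G : Subgroup (Equiv.Perm V)) : Prop :=
  N ≤ G ∧ ∀ g ∈ G, ∀ x ∈ N, g * x * g⁻¹ ∈ N

/-- The `N`-orbit of a vertex, as a point of the orbit space `V_N`. -/
def orbMk (N : Subgroup (Equiv.Perm V)) (v : V) : Quotient (MulAction.orbitRel N V) :=
  Quotient.mk _ v

/-- The arc set of the quotient digraph `Γ_N`. -/
def quotArc (A : V → V → Prop) (N : Subgroup (Equiv.Perm V)) :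
    Quotient (MulAction.orbitRel N V) → Quotient (MulAction.orbitRel N V) → Prop :=
  fun U U' => ∃ u u' : V, orbMk N u = U ∧ orbMk N u' = U' ∧ A u u'

/-- The orbit-relation of the induced action of `M/N` on the `N`-orbit space `V_N`:
two `N`-orbits are related if some element of `M` carries a representative of the first
to a representative of the second.  The quotient `Quot (relOn N M)` is the vertex set of
the quotient digraph `(Γ_N)_{M/N}`. -/
def relOn (N M : Subgroup (Equiv.Perm V)) :
    Quotient (MulAction.orbitRel N V) → Quotient (MulAction.orbitRel N V) → Prop :=
  fun U U' => ∃ u u' : V, orbMk N u = U ∧ orbMk N u' = U' ∧ ∃ m ∈ M, m u = u'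

/-- The arc set of the quotient digraph `(Γ_N)_{M/N}` of `Γ_N`. -/
def quot2Arc (A : V → V → Prop) (N M : Subgroup (Equiv.Perm V)) :
    Quot (relOn N M) → Quot (relOn N M) → Prop :=
  fun W W' => ∃ U U' : Quotient (MulAction.orbitRel N V),
    Quot.mk _ U = W ∧ Quot.mk _ U' = W' ∧ quotArc A N U U'

/-- The digraph with arc set `B` on vertex set `α` is isomorphic to the directed cycle
`C_r→`, whose vertex set is `Z_r` with arcs `(i, i+1)`. -/
def IsoDirectedCycle {α : Type*} (B : α → α → Prop) (r : ℕ) : Prop :=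
  ∃ e : α ≃ ZMod r, ∀ a b : α, B a b ↔ e b = e a + 1

/-!
Choose `M ⊴ G` maximal among the normal subgroups containing `N` with at least three orbits.
Everything except the digraph property of `Γ_M` is then formal: normality of `M` transports
vertex- and arc-transitivity to `Γ_M`, maximality forces the kernel on `V_M` to be `M` and every
larger normal subgroup to have at most two orbits, and `(Γ_M)_{M'/M} ≅ Γ_{M'}`.
For the digraph property: if a single 2-arc `a → b → c` had `a` and `c` in one `M`-orbit then,
by 2-arc-transitivity, every 2-arc would; then every 2-arc of `Γ_M` returns to its start, so the
connected digraph `Γ_M` consists of a single arc and its reverse, contradicting `|V_M| ≥ 3`.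
-/

lemma orbMk_eq_orbMk_iff (M : Subgroup (Equiv.Perm V)) (u v : V) :
    orbMk M u = orbMk M v ↔ ∃ m ∈ M, m v = u := by
  rw [orbMk, orbMk, Quotient.eq, MulAction.orbitRel_apply, MulAction.mem_orbit_iff]
  exact ⟨fun ⟨⟨m, hm⟩, h⟩ => ⟨m, hm, h⟩, fun ⟨m, hm, h⟩ => ⟨⟨m, hm⟩, h⟩⟩

lemma orbMk_surjective (M : Subgroup (Equiv.Perm V)) : Function.Surjective (orbMk M) :=
  Quotient.mk_surjective

lemma orbMk_apply_of_mem {M : Subgroup (Equiv.Perm V)} {m : Equiv.Perm V} (hm : m ∈ M) (v : V) :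
    orbMk M (m v) = orbMk M v :=
  (orbMk_eq_orbMk_iff M _ v).mpr ⟨m, hm, rfl⟩

lemma card_orbits_eq_of_orbMk_eq_iff {K M : Subgroup (Equiv.Perm V)}
    (h : ∀ u v : V, orbMk K u = orbMk K v ↔ orbMk M u = orbMk M v) :
    Nat.card (Quotient (MulAction.orbitRel K V)) = Nat.card (Quotient (MulAction.orbitRel M V)) :=
  Nat.card_congr <| Quotient.congrRight fun u v => by
    simpa only [orbMk, Quotient.eq] using h u v

lemma one_lt_card_orbits [Finite V] {L : Subgroup (Equiv.Perm V)} {u v : V}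
    (h : ∀ l ∈ L, l u ≠ v) : 1 < Nat.card (Quotient (MulAction.orbitRel L V)) :=
  Finite.one_lt_card_iff_nontrivial.mpr
    ⟨orbMk L v, orbMk L u, fun huv => by
      obtain ⟨l, hl, hlu⟩ := (orbMk_eq_orbMk_iff L v u).mp huv
      exact h l hl hlu⟩

section Normal

variable {M G : Subgroup (Equiv.Perm V)}

lemma NormalIn.orbMk_apply_eq (hM : NormalIn M G) {g : Equiv.Perm V} (hg : g ∈ G) {u v : V}
    (h : orbMk M u = orbMk M v) : orbMk M (g u) = orbMk M (g v) := by
  obtain ⟨m, hm, rfl⟩ := (orbMk_eq_orbMk_iff M u v).mp h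
  refine (orbMk_eq_orbMk_iff M _ _).mpr ⟨g * m * g⁻¹, hM.2 g hg m hm, ?_⟩
  simp [Equiv.Perm.mul_apply]

lemma NormalIn.quot_vertexTransitive (hM : NormalIn M G) (hvt : VertexTransitive G)
    (U U' : Quotient (MulAction.orbitRel M V)) :
    ∃ g ∈ G, ∀ u : V, orbMk M u = U → orbMk M (g u) = U' := by
  obtain ⟨u₀, rfl⟩ := orbMk_surjective M U
  obtain ⟨u₀', rfl⟩ := orbMk_surjective M U'
  obtain ⟨g, hg, rfl⟩ := hvt u₀ u₀'
  exact ⟨g, hg, fun u hu => hM.orbMk_apply_eq hg hu⟩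

def orbitKernel (M G : Subgroup (Equiv.Perm V)) : Subgroup (Equiv.Perm V) where
  carrier := {g | g ∈ G ∧ ∀ v, orbMk M (g v) = orbMk M v}
  one_mem' := ⟨G.one_mem, fun _ => rfl⟩
  mul_mem' ha hb := ⟨G.mul_mem ha.1 hb.1, fun v => (ha.2 _).trans (hb.2 v)⟩
  inv_mem' {g} hg := ⟨G.inv_mem hg.1, fun v => by simpa using (hg.2 (g⁻¹ v)).symm⟩

lemma NormalIn.le_orbitKernel (hM : NormalIn M G) : M ≤ orbitKernel M G :=
  fun _ hm => ⟨hM.1 hm, orbMk_apply_of_mem hm⟩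

lemma NormalIn.orbitKernel_normalIn (hM : NormalIn M G) : NormalIn (orbitKernel M G) G := by
  refine ⟨fun _ hk => hk.1, fun x hx k hk => ⟨G.mul_mem (G.mul_mem hx hk.1) (G.inv_mem hx),
    fun v => ?_⟩⟩
  calc orbMk M (x (k (x⁻¹ v))) = orbMk M (x (x⁻¹ v)) := hM.orbMk_apply_eq hx (hk.2 _)
    _ = orbMk M v := by rw [Equiv.Perm.coe_inv, Equiv.apply_symm_apply]

lemma NormalIn.orbMk_orbitKernel_eq_iff (hM : NormalIn M G) (u v : V) :
    orbMk (orbitKernel M G) u = orbMk (orbitKernel M G) v ↔ orbMk M u = orbMk M v := by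
  refine ⟨fun h => ?_, fun h => ?_⟩
  · obtain ⟨k, hk, rfl⟩ := (orbMk_eq_orbMk_iff _ u v).mp h
    exact hk.2 v
  · obtain ⟨m, hm, rfl⟩ := (orbMk_eq_orbMk_iff M u v).mp h
    exact orbMk_apply_of_mem (hM.le_orbitKernel hm) v

def IsNondegenerateNormal (G L : Subgroup (Equiv.Perm V)) : Prop :=
  NormalIn L G ∧ 3 ≤ Nat.card (Quotient (MulAction.orbitRel L V))

lemma forall_orbMk_apply_eq_iff_mem_of_maximal (hmax : Maximal (IsNondegenerateNormal G) M) :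
    ∀ g ∈ G, (∀ v : V, orbMk M (g v) = orbMk M v) ↔ g ∈ M := by
  obtain ⟨hM, hM3⟩ := hmax.1
  have hK : orbitKernel M G ≤ M := by
    refine hmax.2 ⟨hM.orbitKernel_normalIn, ?_⟩ hM.le_orbitKernel
    rwa [card_orbits_eq_of_orbMk_eq_iff hM.orbMk_orbitKernel_eq_iff]
  exact fun g hg => ⟨fun h => hK ⟨hg, h⟩, fun hm => orbMk_apply_of_mem hm⟩

lemma quasiprimitive_or_biquasiprimitive_of_maximal [Finite V]
    (hmax : Maximal (IsNondegenerateNormal G) M) :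
    (∀ L : Subgroup (Equiv.Perm V), NormalIn L G → M ≤ L → M ≠ L →
        (∀ u v : V, ∃ l ∈ L, l u = v)) ∨
      ((∀ L : Subgroup (Equiv.Perm V), NormalIn L G → M ≤ L → M ≠ L →
          Nat.card (Quotient (MulAction.orbitRel L V)) ≤ 2) ∧
        (∃ L : Subgroup (Equiv.Perm V), NormalIn L G ∧ M ≤ L ∧
          Nat.card (Quotient (MulAction.orbitRel L V)) = 2)) := by
  have hle : ∀ L : Subgroup (Equiv.Perm V), NormalIn L G → M ≤ L → M ≠ L →
      Nat.card (Quotient (MulAction.orbitRel L V)) ≤ 2 := by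
    intro L hL hML hne
    by_contra h
    exact hne (le_antisymm hML (hmax.2 ⟨hL, by omega⟩ hML))
  refine or_iff_not_imp_left.mpr fun hq => ⟨hle, ?_⟩
  push Not at hq
  obtain ⟨L, hL, hML, hne, u, v, huv⟩ := hq
  exact ⟨L, hL, hML, le_antisymm (hle L hL hML hne) (one_lt_card_orbits huv)⟩

end Normal

section Arcs

variable {A : V → V → Prop}

lemma PreservesArcs.mono {M G : Subgroup (Equiv.Perm V)} (h : PreservesArcs A G) (hMG : M ≤ G) :
    PreservesArcs A M :=
  fun m hm => h m (hMG hm)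

lemma IsArcSeq.snoc {t : ℕ} {p : Fin (t + 1) → V} (hp : IsArcSeq A t p) {w : V}
    (hw : A (p (Fin.last t)) w) : IsArcSeq A (t + 1) (Fin.snoc p w) := by
  intro i
  induction i using Fin.lastCases with
  | last => rwa [Fin.succ_last, Fin.snoc_last, Fin.snoc_castSucc]
  | cast j => rw [Fin.succ_castSucc, Fin.snoc_castSucc, Fin.snoc_castSucc]; exact hp j

lemma isArcSeq_two {a b c : V} (hab : A a b) (hbc : A b c) : IsArcSeq A 2 ![a, b, c] := by
  intro i
  fin_cases i
  exacts [hab, hbc]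

lemma ArcTransitive.of_succ {G : Subgroup (Equiv.Perm V)} {t : ℕ} (hout : ∀ v, ∃ w, A v w)
    (h : ArcTransitive A G (t + 1)) : ArcTransitive A G t := by
  intro p q hp hq
  obtain ⟨w, hw⟩ := hout (p (Fin.last t))
  obtain ⟨w', hw'⟩ := hout (q (Fin.last t))
  obtain ⟨g, hg, hgpq⟩ := h _ _ (hp.snoc hw) (hq.snoc hw')
  exact ⟨g, hg, fun i => by simpa using hgpq i.castSucc⟩

lemma ArcTransitive.of_le {G : Subgroup (Equiv.Perm V)} {s t : ℕ} (hout : ∀ v, ∃ w, A v w)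
    (h : ArcTransitive A G s) (hts : t ≤ s) : ArcTransitive A G t := by
  obtain ⟨k, rfl⟩ := Nat.exists_eq_add_of_le hts
  induction k with
  | zero => exact h
  | succ k ih => exact ih (h.of_succ hout) (by omega)

lemma connected_quotArc (hconn : Connected A) (M : Subgroup (Equiv.Perm V)) :
    Connected (quotArc A M) := by
  intro U U'
  obtain ⟨u, rfl⟩ := orbMk_surjective M U
  obtain ⟨u', rfl⟩ := orbMk_surjective M U'
  exact (hconn u u').lift (orbMk M) fun a b h =>
    h.imp (fun h => ⟨a, b, rfl, rfl, h⟩) (fun h => ⟨b, a, rfl, rfl, h⟩)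

section Lift

variable {M : Subgroup (Equiv.Perm V)} (hM : PreservesArcs A M)
include hM

lemma exists_arc_of_quotArc {u : V} {W : Quotient (MulAction.orbitRel M V)}
    (h : quotArc A M (orbMk M u) W) : ∃ w, A u w ∧ orbMk M w = W := by
  obtain ⟨a, w, ha, rfl, haw⟩ := h
  obtain ⟨m, hm, rfl⟩ := (orbMk_eq_orbMk_iff M u a).mp ha.symm
  exact ⟨m w, hM m hm a w haw, orbMk_apply_of_mem hm w⟩

lemma exists_twoArc_of_quotArc {U W X : Quotient (MulAction.orbitRel M V)}
    (h₁ : quotArc A M U W) (h₂ : quotArc A M W X) :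
    ∃ a b c : V, A a b ∧ A b c ∧ orbMk M a = U ∧ orbMk M c = X := by
  obtain ⟨a, rfl⟩ := orbMk_surjective M U
  obtain ⟨b, hab, rfl⟩ := exists_arc_of_quotArc hM h₁
  obtain ⟨c, hbc, rfl⟩ := exists_arc_of_quotArc hM h₂
  exact ⟨a, b, c, hab, hbc, rfl, rfl⟩

lemma isDigraph_quotArc (h : ∀ a b c : V, A a b → A b c → orbMk M a ≠ orbMk M c) :
    IsDigraph (quotArc A M) := fun _ _ h₁ h₂ => by
  obtain ⟨a, b, c, hab, hbc, ha, hc⟩ := exists_twoArc_of_quotArc hM h₁ h₂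
  exact h a b c hab hbc (ha.trans hc.symm)

lemma exists_isArcSeq_lift : ∀ {n : ℕ} {p : Fin (n + 1) → Quotient (MulAction.orbitRel M V)},
    IsArcSeq (quotArc A M) n p → ∃ P : Fin (n + 1) → V, IsArcSeq A n P ∧ ∀ i, orbMk M (P i) = p i
  | 0, p, _ => by
    obtain ⟨v, hv⟩ := orbMk_surjective M (p 0)
    exact ⟨fun _ => v, fun i => i.elim0, fun i => by rwa [Fin.fin_one_eq_zero i]⟩
  | n + 1, p, hp => by
    obtain ⟨P, hP, hPp⟩ := exists_isArcSeq_lift (p := fun i => p i.castSucc) fun i => by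
      simpa only [Fin.succ_castSucc] using hp i.castSucc
    have hlast := hp (Fin.last n)
    rw [← hPp, Fin.succ_last] at hlast
    obtain ⟨w, hw, hwp⟩ := exists_arc_of_quotArc hM hlast
    refine ⟨Fin.snoc P w, hP.snoc hw, fun i => ?_⟩
    induction i using Fin.lastCases with
    | last => simpa using hwp
    | cast j => simpa using hPp j

end Lift

lemma NormalIn.quot_arcTransitive {M G : Subgroup (Equiv.Perm V)} {s : ℕ} (hM : NormalIn M G)
    (hAut : PreservesArcs A G) (hat : ArcTransitive A G s)
    (p q : Fin (s + 1) → Quotient (MulAction.orbitRel M V))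
    (hp : IsArcSeq (quotArc A M) s p) (hq : IsArcSeq (quotArc A M) s q) :
    ∃ g ∈ G, ∀ (i : Fin (s + 1)) (u : V), orbMk M u = p i → orbMk M (g u) = q i := by
  obtain ⟨P, hP, hPp⟩ := exists_isArcSeq_lift (hAut.mono hM.1) hp
  obtain ⟨Q, hQ, hQq⟩ := exists_isArcSeq_lift (hAut.mono hM.1) hq
  obtain ⟨g, hg, hgPQ⟩ := hat P Q hP hQ
  refine ⟨g, hg, fun i u hu => ?_⟩
  rw [hM.orbMk_apply_eq hg (hu.trans (hPp i).symm), hgPQ i, hQq i]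

lemma NormalIn.orbMk_eq_of_twoArc {M G : Subgroup (Equiv.Perm V)} (hM : NormalIn M G)
    (hat : ArcTransitive A G 2) {a b c : V} (hab : A a b) (hbc : A b c)
    (hac : orbMk M a = orbMk M c) {x y z : V} (hxy : A x y) (hyz : A y z) :
    orbMk M x = orbMk M z := by
  obtain ⟨g, hg, hgxyz⟩ := hat _ _ (isArcSeq_two hab hbc) (isArcSeq_two hxy hyz)
  have hx : g a = x := hgxyz 0
  have hz : g c = z := hgxyz 2
  rw [← hx, ← hz]
  exact hM.orbMk_apply_eq hg hac

end Arcs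

section TwoArcs

variable {α : Type*} {B : α → α → Prop}

-- Every neighbour of `a` or of `b` lies in `{a, b}`, so connectivity confines all vertices there.
lemma eq_or_eq_of_forall_twoArc (hconn : Connected B) (hout : ∀ v, ∃ w, B v w)
    (hback : ∀ x y z, B x y → B y z → x = z) {a b : α} (hab : B a b) (v : α) :
    v = a ∨ v = b := by
  have hba : B b a := by
    obtain ⟨w, hw⟩ := hout b
    rwa [← hback a b w hab hw] at hw
  induction hconn a v with
  | refl => exact Or.inl rfl
  | tail _ hvw ih =>
    rcases ih with rfl | rfl <;> rcases hvw with h | h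
    · exact Or.inr (hback _ _ _ hba h).symm
    · exact Or.inr (hback _ _ _ h hab)
    · exact Or.inl (hback _ _ _ hab h).symm
    · exact Or.inl (hback _ _ _ h hba)

lemma card_le_two_of_forall_twoArc (hconn : Connected B) (hout : ∀ v, ∃ w, B v w)
    (hback : ∀ x y z, B x y → B y z → x = z) {a b : α} (hab : B a b) : Nat.card α ≤ 2 := by
  have hsurj : Function.Surjective fun x : Bool => if x then a else b := fun v => by
    rcases eq_or_eq_of_forall_twoArc hconn hout hback hab v with rfl | rfl
    exacts [⟨true, rfl⟩, ⟨false, rfl⟩]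
  simpa using Nat.card_le_card_of_surjective _ hsurj

end TwoArcs

lemma NormalIn.orbMk_ne_of_twoArc {A : V → V → Prop} {M G : Subgroup (Equiv.Perm V)} {s : ℕ}
    (hM : NormalIn M G) (hAut : PreservesArcs A G) (hconn : Connected A)
    (hvt : VertexTransitive G) (hs : 2 ≤ s) (hat : ArcTransitive A G s)
    (hM3 : 3 ≤ Nat.card (Quotient (MulAction.orbitRel M V))) {a b c : V}
    (hab : A a b) (hbc : A b c) : orbMk M a ≠ orbMk M c := by
  intro hac
  have hout : ∀ v, ∃ w, A v w := fun v => by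
    obtain ⟨g, hg, rfl⟩ := hvt a v
    exact ⟨g b, hAut g hg a b hab⟩
  have houtM : ∀ U, ∃ W, quotArc A M U W := fun U => by
    obtain ⟨u, rfl⟩ := orbMk_surjective M U
    obtain ⟨w, hw⟩ := hout u
    exact ⟨orbMk M w, u, w, rfl, rfl, hw⟩
  have hback : ∀ U W X, quotArc A M U W → quotArc A M W X → U = X := fun U W X h₁ h₂ => by
    obtain ⟨x, y, z, hxy, hyz, rfl, rfl⟩ := exists_twoArc_of_quotArc (hAut.mono hM.1) h₁ h₂
    exact hM.orbMk_eq_of_twoArc (hat.of_le hout hs) hab hbc hac hxy hyz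
  have := card_le_two_of_forall_twoArc (connected_quotArc hconn M) houtM hback
    (show quotArc A M (orbMk M a) (orbMk M b) from ⟨a, b, rfl, rfl, hab⟩)
  omega

section DirectedCycle

variable {M M' : Subgroup (Equiv.Perm V)}

/-- The vertex set of `(Γ_M)_{M'/M}` is that of `Γ_{M'}`. -/
def quotQuotEquiv (hMM' : M ≤ M') : Quot (relOn M M') ≃ Quotient (MulAction.orbitRel M' V) where
  toFun := Quot.lift (Quotient.lift (orbMk M') fun u v huv =>
      (orbMk_eq_orbMk_iff M' u v).mpr <| by
        obtain ⟨m, hm, h⟩ := (orbMk_eq_orbMk_iff M u v).mp (Quotient.sound huv)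
        exact ⟨m, hMM' hm, h⟩)
    (by
      rintro _ _ ⟨u, u', rfl, rfl, m, hm, rfl⟩
      exact (orbMk_apply_of_mem hm u).symm)
  invFun := Quotient.lift (fun u => Quot.mk _ (orbMk M u)) fun u v huv => by
    obtain ⟨m, hm, rfl⟩ := (orbMk_eq_orbMk_iff M' u v).mp (Quotient.sound huv)
    exact (Quot.sound ⟨v, m v, rfl, rfl, m, hm, rfl⟩).symm
  left_inv W := by
    induction W using Quot.ind with
    | mk U => induction U using Quotient.ind with
      | _ v => rfl
  right_inv X := by
    induction X using Quotient.ind with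
    | _ v => rfl

lemma quot2Arc_iff (A : V → V → Prop) (hMM' : M ≤ M') (W W' : Quot (relOn M M')) :
    quot2Arc A M M' W W' ↔ quotArc A M' (quotQuotEquiv hMM' W) (quotQuotEquiv hMM' W') := by
  constructor
  · rintro ⟨_, _, rfl, rfl, u, u', rfl, rfl, huu'⟩
    exact ⟨u, u', rfl, rfl, huu'⟩
  · rintro ⟨u, u', hu, hu', huu'⟩
    refine ⟨orbMk M u, orbMk M u', ?_, ?_, u, u', rfl, rfl, huu'⟩
    exacts [(quotQuotEquiv hMM').injective hu, (quotQuotEquiv hMM').injective hu']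

lemma IsoDirectedCycle.of_equiv {α β : Type*} {B : α → α → Prop} {C : β → β → Prop} {r : ℕ}
    (e : α ≃ β) (he : ∀ a b, B a b ↔ C (e a) (e b)) (h : IsoDirectedCycle B r) :
    IsoDirectedCycle C r := by
  obtain ⟨f, hf⟩ := h
  exact ⟨e.symm.trans f, fun a b => by simpa [he] using hf (e.symm a) (e.symm b)⟩

lemma IsoDirectedCycle.quotArc_of_quot2Arc {A : V → V → Prop} {r : ℕ} (hMM' : M ≤ M')
    (h : IsoDirectedCycle (quot2Arc A M M') r) : IsoDirectedCycle (quotArc A M') r :=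
  h.of_equiv (quotQuotEquiv hMM') (quot2Arc_iff A hMM')

end DirectedCycle

theorem exists_quasiprimitive_or_biquasiprimitive_quotient_general
    [Finite V] (A : V → V → Prop) (G N : Subgroup (Equiv.Perm V)) (s : ℕ)
    (hconn : Connected A) (hAut : PreservesArcs A G)
    (hvt : VertexTransitive G) (hs : 2 ≤ s) (hat : ArcTransitive A G s)
    (hN : NormalIn N G)
    (horbN : 3 ≤ Nat.card (Quotient (MulAction.orbitRel N V))) :
    ∃ M : Subgroup (Equiv.Perm V), NormalIn M G ∧ N ≤ M ∧
      3 ≤ Nat.card (Quotient (MulAction.orbitRel M V)) ∧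
      -- the kernel of the induced action of G on V_M is exactly M
      (∀ g ∈ G, ((∀ v : V, orbMk M (g v) = orbMk M v) ↔ g ∈ M)) ∧
      -- Γ_M is a connected digraph
      IsDigraph (quotArc A M) ∧ Connected (quotArc A M) ∧
      -- the induced action of G/M is vertex-transitive on Γ_M
      (∀ U U' : Quotient (MulAction.orbitRel M V),
        ∃ g ∈ G, ∀ u : V, orbMk M u = U → orbMk M (g u) = U') ∧
      -- the induced action of G/M is transitive on the s-arcs of Γ_M
      (∀ p q : Fin (s + 1) → Quotient (MulAction.orbitRel M V),
        IsArcSeq (quotArc A M) s p → IsArcSeq (quotArc A M) s q →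
        ∃ g ∈ G, ∀ (i : Fin (s + 1)) (u : V), orbMk M u = p i → orbMk M (g u) = q i) ∧
      -- G/M is quasiprimitive or bi-quasiprimitive on V_M: its nontrivial normal
      -- subgroups are the L/M with M < L ⊴ G, and for M ≤ L the L-orbits on V_M
      -- correspond to the L-orbits on V
      ((∀ L : Subgroup (Equiv.Perm V), NormalIn L G → M ≤ L → M ≠ L →
          (∀ u v : V, ∃ l ∈ L, l u = v)) ∨
        ((∀ L : Subgroup (Equiv.Perm V), NormalIn L G → M ≤ L → M ≠ L →
            Nat.card (Quotient (MulAction.orbitRel L V)) ≤ 2) ∧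
          (∃ L : Subgroup (Equiv.Perm V), NormalIn L G ∧ M ≤ L ∧
            Nat.card (Quotient (MulAction.orbitRel L V)) = 2))) ∧
      -- moreover, if no G-normal quotient of Γ is a directed cycle C_r→ (r ≥ 3), then
      -- no (G/M)-normal quotient of Γ_M is a directed cycle C_r→ (r ≥ 3)
      ((∀ r : ℕ, 3 ≤ r → ∀ M' : Subgroup (Equiv.Perm V), NormalIn M' G →
          (¬ ∀ u v : V, ∃ m ∈ M', m u = v) → ¬ IsoDirectedCycle (quotArc A M') r) →
        (∀ r : ℕ, 3 ≤ r → ∀ M' : Subgroup (Equiv.Perm V), M ≤ M' → NormalIn M' G →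
          (¬ ∀ u v : V, ∃ m ∈ M', m u = v) →
          ¬ IsoDirectedCycle (quot2Arc A M M') r)) := by
  obtain ⟨M, hNM, hmax⟩ := Finite.exists_le_maximal (p := IsNondegenerateNormal G) ⟨hN, horbN⟩
  obtain ⟨hM, hM3⟩ := hmax.1
  refine ⟨M, hM, hNM, hM3, forall_orbMk_apply_eq_iff_mem_of_maximal hmax, ?_,
    connected_quotArc hconn M, hM.quot_vertexTransitive hvt, hM.quot_arcTransitive hAut hat,
    quasiprimitive_or_biquasiprimitive_of_maximal hmax, ?_⟩
  · exact isDigraph_quotArc (hAut.mono hM.1) fun a b c =>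
      hM.orbMk_ne_of_twoArc hAut hconn hvt hs hat hM3
  · exact fun hG r hr M' hMM' hM' hntr hiso => hG r hr M' hM' hntr (hiso.quotArc_of_quot2Arc hMM')

theorem exists_quasiprimitive_or_biquasiprimitive_quotient
    [Finite V] (A : V → V → Prop) (G N : Subgroup (Equiv.Perm V)) (s : ℕ)
    (hdig : IsDigraph A) (hconn : Connected A) (hAut : PreservesArcs A G)
    (hvt : VertexTransitive G) (hs : 2 ≤ s) (hat : ArcTransitive A G s)
    (hN : NormalIn N G)
    (horbN : 3 ≤ Nat.card (Quotient (MulAction.orbitRel N V))) :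
    ∃ M : Subgroup (Equiv.Perm V), NormalIn M G ∧ N ≤ M ∧
      3 ≤ Nat.card (Quotient (MulAction.orbitRel M V)) ∧
      -- the kernel of the induced action of G on V_M is exactly M
      (∀ g ∈ G, ((∀ v : V, orbMk M (g v) = orbMk M v) ↔ g ∈ M)) ∧
      -- Γ_M is a connected digraph
      IsDigraph (quotArc A M) ∧ Connected (quotArc A M) ∧
      -- the induced action of G/M is vertex-transitive on Γ_M
      (∀ U U' : Quotient (MulAction.orbitRel M V),
        ∃ g ∈ G, ∀ u : V, orbMk M u = U → orbMk M (g u) = U') ∧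
      -- the induced action of G/M is transitive on the s-arcs of Γ_M
      (∀ p q : Fin (s + 1) → Quotient (MulAction.orbitRel M V),
        IsArcSeq (quotArc A M) s p → IsArcSeq (quotArc A M) s q →
        ∃ g ∈ G, ∀ (i : Fin (s + 1)) (u : V), orbMk M u = p i → orbMk M (g u) = q i) ∧
      -- G/M is quasiprimitive or bi-quasiprimitive on V_M: its nontrivial normal
      -- subgroups are the L/M with M < L ⊴ G, and for M ≤ L the L-orbits on V_M
      -- correspond to the L-orbits on V
      ((∀ L : Subgroup (Equiv.Perm V), NormalIn L G → M ≤ L → M ≠ L →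
          (∀ u v : V, ∃ l ∈ L, l u = v)) ∨
        ((∀ L : Subgroup (Equiv.Perm V), NormalIn L G → M ≤ L → M ≠ L →
            Nat.card (Quotient (MulAction.orbitRel L V)) ≤ 2) ∧
          (∃ L : Subgroup (Equiv.Perm V), NormalIn L G ∧ M ≤ L ∧
            Nat.card (Quotient (MulAction.orbitRel L V)) = 2))) ∧
      -- moreover, if no G-normal quotient of Γ is a directed cycle C_r→ (r ≥ 3), then
      -- no (G/M)-normal quotient of Γ_M is a directed cycle C_r→ (r ≥ 3)
      ((∀ r : ℕ, 3 ≤ r → ∀ M' : Subgroup (Equiv.Perm V), NormalIn M' G →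
          (¬ ∀ u v : V, ∃ m ∈ M', m u = v) → ¬ IsoDirectedCycle (quotArc A M') r) →
        (∀ r : ℕ, 3 ≤ r → ∀ M' : Subgroup (Equiv.Perm V), M ≤ M' → NormalIn M' G →
          (¬ ∀ u v : V, ∃ m ∈ M', m u = v) →
          ¬ IsoDirectedCycle (quot2Arc A M M') r)) :=
  exists_quasiprimitive_or_biquasiprimitive_quotient_general A G N s hconn hAut hvt hs hat hN horbN

end ArcTransDigraph
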